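/- arXiv:math/0506607 — 3 statements merged into one kernel-verified Lean document; each statement's English description precedes it below -/
import Mathlib

section
/- Let d ≥ 2, let f : ℝ^d → ℝ be an integrable probability density with compact support, and let φ : ℝ → ℝ be bounded, measurable and compactly supported. Fix j ∈ ℕ and suppose C_j(f) = 0. Then the projections coincide: for every x ∈ ℝ^d, Σ_{k∈ℤ^d} α_{jk}(f) Φ_{jk}(x) = ∏_{ℓ=1}^d ( Σ_{k^ℓ∈ℤ} α_{jk^ℓ}(f^{*ℓ}) φ_{jk^ℓ}(x^ℓ) ), where all sums have only finitely many nonzero terms. -/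
open MeasureTheory
open scoped ENNReal NNReal

/-- `φ_{jk}(x) = 2^{j/2} φ(2^j x − k)`. -/
noncomputable def phiW (φ : ℝ → ℝ) (j : ℕ) (k : ℤ) (x : ℝ) : ℝ :=
  (2 : ℝ) ^ ((j : ℝ) / 2) * φ ((2 : ℝ) ^ (j : ℕ) * x - (k : ℝ))

/-- `Φ_{jk}(x) = φ_{jk¹}(x¹)⋯φ_{jk^d}(x^d)`. -/
noncomputable def PhiW (d : ℕ) (φ : ℝ → ℝ) (j : ℕ) (k : Fin d → ℤ) (x : Fin d → ℝ) : ℝ :=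
  ∏ ℓ, phiW φ j (k ℓ) (x ℓ)

/-- The ℓ-th marginal `f^{*ℓ}` of `f : ℝ^d → ℝ`. -/
noncomputable def marg (d : ℕ) (f : (Fin d → ℝ) → ℝ) (ℓ : Fin d) (y : ℝ) : ℝ :=
  ∫ z : {i : Fin d // i ≠ ℓ} → ℝ, f (fun i => if h : i = ℓ then y else z ⟨i, h⟩)

/-- Wavelet coefficient `α_{jk}(f) = ∫ f Φ_{jk}`. -/
noncomputable def alphaW (d : ℕ) (φ : ℝ → ℝ) (j : ℕ) (k : Fin d → ℤ)
    (f : (Fin d → ℝ) → ℝ) : ℝ :=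
  ∫ x : Fin d → ℝ, f x * PhiW d φ j k x

/-- One-dimensional wavelet coefficient `α_{jk}(g) = ∫ g φ_{jk}`. -/
noncomputable def alpha1 (φ : ℝ → ℝ) (j : ℕ) (k : ℤ) (g : ℝ → ℝ) : ℝ :=
  ∫ y : ℝ, g y * phiW φ j k y

/-- The wavelet contrast `C_j(f)`. -/
noncomputable def contrastW (d : ℕ) (φ : ℝ → ℝ) (j : ℕ) (f : (Fin d → ℝ) → ℝ) : ℝ :=
  ∑' k : Fin d → ℤ, (alphaW d φ j k f - ∏ ℓ, alpha1 φ j (k ℓ) (marg d f ℓ)) ^ 2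


/-!
Since `φ` and `f` have compact support, `α_{jk}(f)` and `α_{jk}(f^{*ℓ})` vanish for all but
finitely many `k`. The contrast is therefore a finite sum of squares, and `C_j(f) = 0` gives
`α_{jk}(f) = ∏_ℓ α_{jk^ℓ}(f^{*ℓ})` for every `k`. For fixed `x` only finitely many
`φ_{jk}(x^ℓ)` are nonzero, so the sum over `ℤ^d` of the resulting product factorizes.
-/

open Function

lemma finite_preimage_intCast_of_isCompact {K : Set ℝ} (hK : IsCompact K) :
    ((↑) ⁻¹' K : Set ℤ).Finite :=
  tendsto_cofinite_cocompact_iff.mp Int.tendsto_coe_cofinite K hK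

lemma finite_support_prod_apply {ι κ R : Type*} [Fintype ι] [CommMonoidWithZero R]
    [Nontrivial R] [NoZeroDivisors R] {h : ι → κ → R} (hh : ∀ i, (support (h i)).Finite) :
    (support fun k : ι → κ => ∏ i, h i (k i)).Finite :=
  (Set.Finite.pi' hh).subset fun _ hk i =>
    Finset.prod_ne_zero_iff.mp hk i (Finset.mem_univ i)

lemma tsum_prod_apply_eq_prod_tsum {ι κ R : Type*} [Fintype ι] [DecidableEq ι]
    [CommSemiring R] [TopologicalSpace R] {h : ι → κ → R}
    (hh : ∀ i, (support (h i)).Finite) :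
    ∑' k : ι → κ, ∏ i, h i (k i) = ∏ i, ∑' m, h i m := by
  have hsum : ∀ i, ∑' m, h i m = ∑ m ∈ (hh i).toFinset, h i m := fun i =>
    tsum_eq_sum' (hh i).coe_toFinset.ge
  rw [Finset.prod_congr rfl fun i _ => hsum i, Finset.prod_univ_sum]
  refine tsum_eq_sum fun _ hk => ?_
  obtain ⟨i, hi⟩ := not_forall.mp (mt Fintype.mem_piFinset.mpr hk)
  exact Finset.prod_eq_zero (Finset.mem_univ i) (by simpa using hi)

lemma finite_setOf_exists_phiW_ne_zero {φ : ℝ → ℝ} (hφ : HasCompactSupport φ) (j : ℕ)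
    {K : Set ℝ} (hK : IsCompact K) : {k : ℤ | ∃ y ∈ K, phiW φ j k y ≠ 0}.Finite := by
  refine (finite_preimage_intCast_of_isCompact ((hK.prod hφ).image
    (f := fun p : ℝ × ℝ => (2 : ℝ) ^ j * p.1 - p.2) (by fun_prop))).subset ?_
  rintro k ⟨y, hyK, hy⟩
  have hφy : φ ((2 : ℝ) ^ j * y - k) ≠ 0 := right_ne_zero_of_mul hy
  exact ⟨(y, _), ⟨hyK, subset_tsupport φ hφy⟩, sub_sub_cancel _ _⟩

lemma finite_support_alpha1 {φ : ℝ → ℝ} (hφ : HasCompactSupport φ) (j : ℕ) {g : ℝ → ℝ}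
    (hg : HasCompactSupport g) : (support fun k => alpha1 φ j k g).Finite := by
  refine (finite_setOf_exists_phiW_ne_zero hφ j hg).subset fun k hk => ?_
  obtain ⟨y, hy⟩ := exists_ne_zero_of_integral_ne_zero hk
  exact ⟨y, subset_tsupport g (left_ne_zero_of_mul hy), right_ne_zero_of_mul hy⟩

lemma finite_support_alphaW {φ : ℝ → ℝ} (hφ : HasCompactSupport φ) (d j : ℕ)
    {f : (Fin d → ℝ) → ℝ} (hf : HasCompactSupport f) :
    (support fun k => alphaW d φ j k f).Finite := by
  refine (Set.Finite.pi' fun ℓ => finite_setOf_exists_phiW_ne_zero hφ j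
    (hf.image (continuous_apply ℓ))).subset fun k hk ℓ => ?_
  obtain ⟨x, hx⟩ := exists_ne_zero_of_integral_ne_zero hk
  exact ⟨x ℓ, ⟨x, subset_tsupport f (left_ne_zero_of_mul hx), rfl⟩,
    Finset.prod_ne_zero_iff.mp (right_ne_zero_of_mul hx) ℓ (Finset.mem_univ ℓ)⟩

lemma hasCompactSupport_marg {d : ℕ} {f : (Fin d → ℝ) → ℝ} (hf : HasCompactSupport f)
    (ℓ : Fin d) : HasCompactSupport (marg d f ℓ) := by
  refine HasCompactSupport.intro (hf.image (continuous_apply ℓ)) fun y hy => ?_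
  refine integral_eq_zero_of_ae (Filter.Eventually.of_forall fun z => ?_)
  refine image_eq_zero_of_notMem_tsupport fun hmem => hy ⟨_, hmem, ?_⟩
  simp

lemma alphaW_eq_prod_alpha1_of_contrastW_eq_zero {φ : ℝ → ℝ} (hφ : HasCompactSupport φ)
    {d j : ℕ} {f : (Fin d → ℝ) → ℝ} (hf : HasCompactSupport f) (hC : contrastW d φ j f = 0)
    (k : Fin d → ℤ) : alphaW d φ j k f = ∏ ℓ, alpha1 φ j (k ℓ) (marg d f ℓ) := by
  have hfin : (support fun k : Fin d → ℤ =>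
      (alphaW d φ j k f - ∏ ℓ, alpha1 φ j (k ℓ) (marg d f ℓ)) ^ 2).Finite := by
    refine ((finite_support_alphaW hφ d j hf).union (finite_support_prod_apply
      fun ℓ => finite_support_alpha1 hφ j (hasCompactSupport_marg hf ℓ))).subset
      fun k hk => ?_
    by_contra hout
    simp only [Set.mem_union, mem_support, not_or, not_not] at hout
    simp [hout.1, hout.2] at hk
  have hsum : HasSum (fun k : Fin d → ℤ =>
      (alphaW d φ j k f - ∏ ℓ, alpha1 φ j (k ℓ) (marg d f ℓ)) ^ 2) 0 := by
    rw [← hC]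
    exact (summable_of_hasFiniteSupport hfin).hasSum
  have hterms := (hasSum_zero_iff_of_nonneg fun k => sq_nonneg _).mp hsum
  exact sub_eq_zero.mp (pow_eq_zero_iff two_ne_zero |>.mp (congrFun hterms k))

theorem projections_coincide_of_contrast_eq_zero_general
    (d : ℕ) (φ : ℝ → ℝ) (hφc : HasCompactSupport φ)
    (f : (Fin d → ℝ) → ℝ) (hfc : HasCompactSupport f)
    (j : ℕ) (hC : contrastW d φ j f = 0) :
    ∀ x : Fin d → ℝ,
      {k : Fin d → ℤ | alphaW d φ j k f * PhiW d φ j k x ≠ 0}.Finite ∧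
      (∀ ℓ, {kl : ℤ | alpha1 φ j kl (marg d f ℓ) * phiW φ j kl (x ℓ) ≠ 0}.Finite) ∧
      (∑' k : Fin d → ℤ, alphaW d φ j k f * PhiW d φ j k x)
        = ∏ ℓ, ∑' kl : ℤ, alpha1 φ j kl (marg d f ℓ) * phiW φ j kl (x ℓ) := by
  intro x
  have hphi : ∀ ℓ, (support fun kl : ℤ => phiW φ j kl (x ℓ)).Finite := fun ℓ =>
    (finite_setOf_exists_phiW_ne_zero hφc j isCompact_singleton).subset
      fun kl hkl => ⟨x ℓ, rfl, hkl⟩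
  have hterm : ∀ ℓ, (support fun kl : ℤ =>
      alpha1 φ j kl (marg d f ℓ) * phiW φ j kl (x ℓ)).Finite := fun ℓ =>
    (hphi ℓ).subset fun kl hkl => right_ne_zero_of_mul hkl
  have hsplit : ∀ k : Fin d → ℤ, alphaW d φ j k f * PhiW d φ j k x
      = ∏ ℓ, alpha1 φ j (k ℓ) (marg d f ℓ) * phiW φ j (k ℓ) (x ℓ) := fun k => by
    rw [alphaW_eq_prod_alpha1_of_contrastW_eq_zero hφc hfc hC, PhiW,
      Finset.prod_mul_distrib]
  refine ⟨(finite_support_prod_apply hphi).subset fun k hk => right_ne_zero_of_mul hk,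
    hterm, ?_⟩
  rw [tsum_congr hsplit, tsum_prod_apply_eq_prod_tsum hterm]

/-- If `f` is a compactly supported integrable probability density, `φ` is bounded,
measurable and compactly supported, and `C_j(f) = 0`, then the projections coincide:
for every `x`, `Σ_k α_{jk}(f) Φ_{jk}(x) = ∏_ℓ Σ_{k^ℓ} α_{jk^ℓ}(f^{*ℓ}) φ_{jk^ℓ}(x^ℓ)`,
all sums having only finitely many nonzero terms. -/
theorem projections_coincide_of_contrast_eq_zero
    (d : ℕ) (hd : 2 ≤ d) (φ : ℝ → ℝ) (hφm : Measurable φ)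
    (hφb : ∃ M, ∀ x, |φ x| ≤ M) (hφc : HasCompactSupport φ)
    (f : (Fin d → ℝ) → ℝ) (hf : Integrable f) (hf0 : ∀ x, 0 ≤ f x)
    (hfint : ∫ x, f x = 1) (hfc : HasCompactSupport f)
    (j : ℕ) (hC : contrastW d φ j f = 0) :
    ∀ x : Fin d → ℝ,
      {k : Fin d → ℤ | alphaW d φ j k f * PhiW d φ j k x ≠ 0}.Finite ∧
      (∀ ℓ, {kl : ℤ | alpha1 φ j kl (marg d f ℓ) * phiW φ j kl (x ℓ) ≠ 0}.Finite) ∧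
      (∑' k : Fin d → ℤ, alphaW d φ j k f * PhiW d φ j k x)
        = ∏ ℓ, ∑' kl : ℤ, alpha1 φ j kl (marg d f ℓ) * phiW φ j kl (x ℓ) :=
  projections_coincide_of_contrast_eq_zero_general d φ hφc f hfc j hC
end

section
/- Let d ≥ 2, 1 ≤ p < ∞, 1 ≤ q < ∞, s > 0, and set k = ⌊s⌋ + 1 (so that k > s). Let f : ℝ^d → ℝ be integrable with f ∈ L_p(ℝ^d) and support contained in the unit cube [0,1]^d. Then for every ℓ ∈ {1,…,d}, ∫_0^∞ ( t^{−s} ω^k(f^{*ℓ}, t)_p )^q dt/t ≤ ∫_0^∞ ( t^{−s} Ω^k(f, t)_p )^q dt/t, where ω^k(f^{*ℓ}, δ)_p = sup_{|t|≤δ} ‖Δ^k_t f^{*ℓ}‖_{L_p(ℝ)}. In particular, if the right-hand side is finite then so is the left-hand side. -/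
open MeasureTheory
open scoped ENNReal NNReal

/-- First-order difference `Δ_h f (x) = f(x+h) − f(x)`. -/
def diffOp {α : Type*} [Add α] (h : α) (f : α → ℝ) : α → ℝ := fun x => f (x + h) - f x

/-- k-th order difference `Δ^k_h f = Δ_h (Δ^{k−1}_h f)`. -/
def diffIter {α : Type*} [Add α] (k : ℕ) (h : α) (f : α → ℝ) : α → ℝ := (diffOp h)^[k] f

/-- Modulus of continuity of order `k` of a univariate function:
`ω^k(g,δ)_p = sup_{|t|≤δ} ‖Δ^k_t g‖_{L_p(ℝ)}`. -/
noncomputable def omegaU (k : ℕ) (p : ℝ≥0∞) (g : ℝ → ℝ) (δ : ℝ) : ℝ≥0∞ :=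
  ⨆ (t : ℝ) (_ : |t| ≤ δ), eLpNorm (diffIter k t g) p volume

/-- Modulus of continuity of order `k` of `f : ℝ^d → ℝ`:
`Ω^k(f,δ)_p = sup_{|h|=1} sup_{|t|≤δ} ‖Δ^k_{th} f‖_p`, over Euclidean unit vectors `h`. -/
noncomputable def OmegaM (d : ℕ) (k : ℕ) (p : ℝ≥0∞) (f : (Fin d → ℝ) → ℝ) (δ : ℝ) : ℝ≥0∞ :=
  ⨆ (h : Fin d → ℝ) (_ : ∑ i, (h i) ^ 2 = 1) (t : ℝ) (_ : |t| ≤ δ),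
    eLpNorm (diffIter k (t • h) f) p volume


/-! Differencing in the direction `e_ℓ` commutes with taking the `ℓ`-th marginal (almost
everywhere, by Fubini), so `Δ^k_t f^{*ℓ} = (Δ^k_{t e_ℓ} f)^{*ℓ}`. The differences of `f` still
vanish unless the coordinates other than `ℓ` lie in `[0,1]^{d-1}`, so the marginal is an average
over a probability space and Jensen's inequality gives `‖g^{*ℓ}‖_p ≤ ‖g‖_p`. Hence
`ω^k(f^{*ℓ}, t)_p ≤ Ω^k(f, t)_p` for every `t`, and the Besov integrands compare pointwise. -/

open Function Set

section Differences

variable {α : Type*}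

theorem diffIter_succ [Add α] (k : ℕ) (h : α) (f : α → ℝ) :
    diffIter (k + 1) h f = diffOp h (diffIter k h f) :=
  Function.iterate_succ_apply' _ _ _

theorem support_diffIter_subset [Add α] {S : Set α} {h : α} (hS : ∀ x, x + h ∈ S → x ∈ S)
    {f : α → ℝ} (hf : support f ⊆ S) (k : ℕ) : support (diffIter k h f) ⊆ S := by
  induction k with
  | zero => exact hf
  | succ k ih =>
    rw [diffIter_succ]
    exact (support_sub _ _).trans (union_subset (fun x hx => hS x (ih hx)) ih)

variable [AddGroup α] [MeasurableSpace α] [MeasurableAdd α] {μ : Measure α}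
  [μ.IsAddRightInvariant]

theorem MeasureTheory.Integrable.diffIter {f : α → ℝ} (hf : Integrable f μ) (k : ℕ) (h : α) :
    Integrable (diffIter k h f) μ := by
  induction k with
  | zero => exact hf
  | succ k ih => rw [diffIter_succ]; exact (ih.comp_add_right h).sub ih

theorem diffOp_congr_ae {f g : α → ℝ} (hfg : f =ᵐ[μ] g) (h : α) :
    diffOp h f =ᵐ[μ] diffOp h g :=
  ((measurePreserving_add_right μ h).quasiMeasurePreserving.ae_eq_comp hfg).sub hfg

end Differences

theorem eLpNorm_integral_right_le {α β : Type*} [MeasurableSpace α] [MeasurableSpace β]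
    {μ : Measure α} {ν : Measure β} [IsProbabilityMeasure ν] {p : ℝ≥0∞} (hp : 1 ≤ p)
    (hp_top : p ≠ ∞) {F : α × β → ℝ} (hF : AEStronglyMeasurable F (μ.prod ν)) :
    eLpNorm (fun x => ∫ y, F (x, y) ∂ν) p μ ≤ eLpNorm F p (μ.prod ν) := by
  have hp0 : p ≠ 0 := (zero_lt_one.trans_le hp).ne'
  have hpr : 0 < p.toReal := ENNReal.toReal_pos hp0 hp_top
  have hsection : ∀ᵐ x ∂μ, ‖∫ y, F (x, y) ∂ν‖ₑ ^ p.toReal ≤ ∫⁻ y, ‖F (x, y)‖ₑ ^ p.toReal ∂ν := by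
    filter_upwards [hF.prodMk_left] with x hx
    rw [← ENNReal.le_rpow_inv_iff hpr]
    calc ‖∫ y, F (x, y) ∂ν‖ₑ ≤ eLpNorm (fun y => F (x, y)) 1 ν := by
          rw [eLpNorm_one_eq_lintegral_enorm]; exact enorm_integral_le_lintegral_enorm _
      _ ≤ eLpNorm (fun y => F (x, y)) p ν := eLpNorm_le_eLpNorm_of_exponent_le hp hx
      _ = (∫⁻ y, ‖F (x, y)‖ₑ ^ p.toReal ∂ν) ^ p.toReal⁻¹ := by
          rw [eLpNorm_eq_lintegral_rpow_enorm_toReal hp0 hp_top, one_div]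
  simp only [eLpNorm_eq_lintegral_rpow_enorm_toReal hp0 hp_top]
  gcongr
  calc ∫⁻ x, ‖∫ y, F (x, y) ∂ν‖ₑ ^ p.toReal ∂μ
      ≤ ∫⁻ x, ∫⁻ y, ‖F (x, y)‖ₑ ^ p.toReal ∂ν ∂μ := lintegral_mono_ae hsection
    _ = ∫⁻ z, ‖F z‖ₑ ^ p.toReal ∂μ.prod ν :=
        (lintegral_prod _ (hF.enorm.pow_const _)).symm

section SplitAt

variable {ι : Type*} [DecidableEq ι] (ℓ : ι)

noncomputable def splitAt : (ι → ℝ) ≃ᵐ ℝ × ({i : ι // i ≠ ℓ} → ℝ) :=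
  (MeasurableEquiv.piEquivPiSubtypeProd (fun _ : ι => ℝ) (· = ℓ)).trans
    ((MeasurableEquiv.funUnique {i : ι // i = ℓ} ℝ).prodCongr (MeasurableEquiv.refl _))

theorem splitAt_symm_apply (y : ℝ) (z : {i : ι // i ≠ ℓ} → ℝ) :
    (splitAt ℓ).symm (y, z) = fun i => if h : i = ℓ then y else z ⟨i, h⟩ := by
  funext i
  by_cases h : i = ℓ
  · subst h; simp [splitAt, MeasurableEquiv.piEquivPiSubtypeProd, Equiv.piEquivPiSubtypeProd,
      MeasurableEquiv.funUnique, MeasurableEquiv.prodCongr]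
  · simp [splitAt, MeasurableEquiv.piEquivPiSubtypeProd, Equiv.piEquivPiSubtypeProd,
      MeasurableEquiv.prodCongr, h]

theorem splitAt_apply_snd (x : ι → ℝ) : (splitAt ℓ x).2 = fun i : {i : ι // i ≠ ℓ} => x i := rfl

theorem volume_preserving_splitAt [Fintype ι] : MeasurePreserving (splitAt ℓ) volume volume := by
  have hprod := (volume_preserving_funUnique {i : ι // i = ℓ} ℝ).prod
    (MeasurePreserving.id (volume : Measure ({i : ι // i ≠ ℓ} → ℝ)))
  rw [← Measure.volume_eq_prod, ← Measure.volume_eq_prod] at hprod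
  have hsplit := volume_preserving_piEquivPiSubtypeProd (fun _ : ι => ℝ) (· = ℓ)
  -- the two sides carry different `Fintype` instances on `{i // i = ℓ}`
  rw [Subsingleton.elim (Subtype.fintype (· = ℓ)) Unique.fintype] at hsplit
  exact hprod.comp hsplit

end SplitAt

section Marginal

variable {d : ℕ} (ℓ : Fin d)

theorem marg_eq_integral_splitAt_symm (g : (Fin d → ℝ) → ℝ) (y : ℝ) :
    marg d g ℓ y = ∫ z, g ((splitAt ℓ).symm (y, z)) := by
  simp only [marg, splitAt_symm_apply]

theorem splitAt_symm_add_smul_single (y t : ℝ) (z : {i : Fin d // i ≠ ℓ} → ℝ) :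
    (splitAt ℓ).symm (y, z) + t • Pi.single ℓ 1 = (splitAt ℓ).symm (y + t, z) := by
  funext i
  by_cases h : i = ℓ <;> simp [splitAt_symm_apply, h]

theorem marg_comp_add_smul_single (g : (Fin d → ℝ) → ℝ) (t : ℝ) :
    marg d (fun x => g (x + t • Pi.single ℓ 1)) ℓ = fun y => marg d g ℓ (y + t) := by
  funext y
  simp only [marg_eq_integral_splitAt_symm, splitAt_symm_add_smul_single]

theorem ae_integrable_splitAt_symm_section {g : (Fin d → ℝ) → ℝ} (hg : Integrable g) :
    ∀ᵐ y : ℝ, Integrable (fun z => g ((splitAt ℓ).symm (y, z))) :=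
  Integrable.prod_right_ae (f := g ∘ (splitAt ℓ).symm)
    (((volume_preserving_splitAt ℓ).symm _).integrable_comp_emb
      (splitAt ℓ).symm.measurableEmbedding |>.2 hg)

theorem marg_sub_ae_eq {g₁ g₂ : (Fin d → ℝ) → ℝ} (hg₁ : Integrable g₁) (hg₂ : Integrable g₂) :
    marg d (g₁ - g₂) ℓ =ᵐ[volume] marg d g₁ ℓ - marg d g₂ ℓ := by
  filter_upwards [ae_integrable_splitAt_symm_section ℓ hg₁,
    ae_integrable_splitAt_symm_section ℓ hg₂] with y h₁ h₂
  simp only [marg_eq_integral_splitAt_symm, Pi.sub_apply]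
  exact integral_sub h₁ h₂

theorem diffIter_marg_ae_eq {f : (Fin d → ℝ) → ℝ} (hf : Integrable f) (t : ℝ) (k : ℕ) :
    diffIter k t (marg d f ℓ) =ᵐ[volume] marg d (diffIter k (t • Pi.single ℓ 1) f) ℓ := by
  induction k with
  | zero => rfl
  | succ k ih =>
    have hk := hf.diffIter k (t • Pi.single ℓ 1)
    calc diffIter (k + 1) t (marg d f ℓ)
        =ᵐ[volume] diffOp t (marg d (diffIter k (t • Pi.single ℓ 1) f) ℓ) := by
          rw [diffIter_succ]; exact diffOp_congr_ae ih t
      _ = marg d (fun x => diffIter k (t • Pi.single ℓ 1) f (x + t • Pi.single ℓ 1)) ℓ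
            - marg d (diffIter k (t • Pi.single ℓ 1) f) ℓ := by
          rw [marg_comp_add_smul_single]; rfl
      _ =ᵐ[volume] marg d (diffIter (k + 1) (t • Pi.single ℓ 1) f) ℓ := by
          rw [diffIter_succ]
          exact (marg_sub_ae_eq ℓ (hk.comp_add_right _) hk).symm

theorem support_diffIter_smul_single_subset {f : (Fin d → ℝ) → ℝ}
    (hf : support f ⊆ Icc 0 1) (k : ℕ) (t : ℝ) :
    support (diffIter k (t • Pi.single ℓ 1) f)
      ⊆ {x | (splitAt ℓ x).2 ∈ Icc 0 1} := by
  refine support_diffIter_subset (fun x hx => ?_) (hf.trans fun x hx => ?_) k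
  · have hshift : (splitAt ℓ (x + t • Pi.single ℓ 1)).2 = (splitAt ℓ x).2 := by
      rw [splitAt_apply_snd, splitAt_apply_snd]
      funext i
      simp [i.2]
    change (splitAt ℓ (x + t • Pi.single ℓ 1)).2 ∈ Icc 0 1 at hx
    rwa [hshift] at hx
  · change (splitAt ℓ x).2 ∈ Icc 0 1
    rw [splitAt_apply_snd]
    exact ⟨fun i => hx.1 i, fun i => hx.2 i⟩

theorem eLpNorm_marg_le {g : (Fin d → ℝ) → ℝ} (hg : AEStronglyMeasurable g)
    (hsupp : support g ⊆ {x | (splitAt ℓ x).2 ∈ Icc 0 1})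
    {p : ℝ≥0∞} (hp : 1 ≤ p) (hp_top : p ≠ ∞) :
    eLpNorm (marg d g ℓ) p volume ≤ eLpNorm g p volume := by
  set Q := Icc (0 : {i : Fin d // i ≠ ℓ} → ℝ) 1
  have : IsProbabilityMeasure (volume.restrict Q) := ⟨by simp [Q, Real.volume_Icc_pi]⟩
  have hsymm := (volume_preserving_splitAt ℓ).symm _
  have hmarg : marg d g ℓ = fun y => ∫ z in Q, g ((splitAt ℓ).symm (y, z)) := by
    funext y
    rw [marg_eq_integral_splitAt_symm, setIntegral_eq_integral_of_forall_compl_eq_zero]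
    intro z hz
    by_contra hne
    have hz' : (splitAt ℓ ((splitAt ℓ).symm (y, z))).2 ∈ Q := hsupp hne
    rw [MeasurableEquiv.apply_symm_apply] at hz'
    exact hz hz'
  have hle : (volume : Measure ℝ).prod (volume.restrict Q) ≤ volume.prod volume :=
    Measure.prod_mono le_rfl Measure.restrict_le_self
  calc eLpNorm (marg d g ℓ) p volume
      = eLpNorm (fun y => ∫ z in Q, g ((splitAt ℓ).symm (y, z))) p volume := by rw [hmarg]
    _ ≤ eLpNorm (g ∘ (splitAt ℓ).symm) p (volume.prod (volume.restrict Q)) :=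
        eLpNorm_integral_right_le (F := g ∘ (splitAt ℓ).symm) hp hp_top
          ((hg.comp_measurePreserving hsymm).mono_measure hle)
    _ ≤ eLpNorm (g ∘ (splitAt ℓ).symm) p (volume.prod volume) := eLpNorm_mono_measure _ hle
    _ = eLpNorm g p volume := eLpNorm_comp_measurePreserving hg hsymm

theorem omegaU_marg_le_OmegaM {f : (Fin d → ℝ) → ℝ} (hf : Integrable f)
    (hsupp : support f ⊆ Icc 0 1) {p : ℝ≥0∞} (hp : 1 ≤ p) (hp_top : p ≠ ∞) (k : ℕ) (δ : ℝ) :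
    omegaU k p (marg d f ℓ) δ ≤ OmegaM d k p f δ := by
  refine iSup₂_le fun t ht => ?_
  have hunit : ∑ i, (Pi.single ℓ 1 : Fin d → ℝ) i ^ 2 = 1 := by simp [Pi.single_apply]
  refine le_iSup₂_of_le (Pi.single ℓ 1 : Fin d → ℝ) hunit (le_iSup₂_of_le t ht ?_)
  rw [eLpNorm_congr_ae (diffIter_marg_ae_eq ℓ hf t k)]
  exact eLpNorm_marg_le ℓ (hf.diffIter k _).aestronglyMeasurable
    (support_diffIter_smul_single_subset ℓ hsupp k t) hp hp_top

end Marginal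

theorem marginal_besov_seminorm_le_general
    (d : ℕ) (p q s : ℝ) (hp : 1 ≤ p) (hq : 1 ≤ q)
    (f : (Fin d → ℝ) → ℝ) (hf : Integrable f)
    (hsupp : Function.support f ⊆ Set.Icc (0 : Fin d → ℝ) 1) :
    ∀ ℓ : Fin d,
      (∫⁻ t in Set.Ioi (0 : ℝ),
          (ENNReal.ofReal (t ^ (-s))
              * omegaU (Nat.floor s + 1) (ENNReal.ofReal p) (marg d f ℓ) t) ^ q
            * ENNReal.ofReal t⁻¹)
        ≤ ∫⁻ t in Set.Ioi (0 : ℝ),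
          (ENNReal.ofReal (t ^ (-s))
              * OmegaM d (Nat.floor s + 1) (ENNReal.ofReal p) f t) ^ q
            * ENNReal.ofReal t⁻¹ := by
  intro ℓ
  refine lintegral_mono fun t => ?_
  gcongr (_ * ?_) ^ q * _
  exact omegaU_marg_le_OmegaM ℓ hf hsupp (ENNReal.one_le_ofReal.2 hp) ENNReal.ofReal_ne_top _ t

/-- Besov-seminorm comparison between a density and its marginals: with `k = ⌊s⌋ + 1`,
`∫_0^∞ (t^{−s} ω^k(f^{*ℓ},t)_p)^q dt/t ≤ ∫_0^∞ (t^{−s} Ω^k(f,t)_p)^q dt/t`. -/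
theorem marginal_besov_seminorm_le
    (d : ℕ) (hd : 2 ≤ d) (p q s : ℝ) (hp : 1 ≤ p) (hq : 1 ≤ q) (hs : 0 < s)
    (f : (Fin d → ℝ) → ℝ) (hf : Integrable f)
    (hfLp : MemLp f (ENNReal.ofReal p) volume)
    (hsupp : Function.support f ⊆ Set.Icc (0 : Fin d → ℝ) 1) :
    ∀ ℓ : Fin d,
      (∫⁻ t in Set.Ioi (0 : ℝ),
          (ENNReal.ofReal (t ^ (-s))
              * omegaU (Nat.floor s + 1) (ENNReal.ofReal p) (marg d f ℓ) t) ^ q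
            * ENNReal.ofReal t⁻¹)
        ≤ ∫⁻ t in Set.Ioi (0 : ℝ),
          (ENNReal.ofReal (t ^ (-s))
              * OmegaM d (Nat.floor s + 1) (ENNReal.ofReal p) f t) ^ q
            * ENNReal.ofReal t⁻¹ :=
  marginal_besov_seminorm_le_general d p q s hp hq f hf hsupp
end

section
/- Let d ≥ 1, 1 ≤ p < ∞, 1 ≤ q < ∞, let s with 0 < s < k for an integer k ≥ 1, let A be an invertible d×d real matrix with ‖A⁻¹‖ the operator norm of its inverse, and let f ∈ L_p(ℝ^d). Define f_A(x) = |det A⁻¹| f(A⁻¹ x). Then ( ∫_0^∞ ( t^{−s} Ω^k(f_A, t)_p )^q dt/t )^{1/q} ≤ |det A|^{−1 + 1/p} ‖A⁻¹‖^{s} ( ∫_0^∞ ( u^{−s} Ω^k(f, u)_p )^q du/u )^{1/q}. In particular, if the Besov-type seminorm of f on the right is finite, then so is that of f_A. -/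
/-!
Substituting `x ↦ A⁻¹ x` turns the `k`-th difference of `f_A` with step `t h` into
`|det A⁻¹|` times the `k`-th difference of `f` with step `A⁻¹ (t h)`, composed with `A⁻¹`.
That step has length at most `‖A⁻¹‖ |t|`, and the change of variables in `L_p` contributes
`|det A|^{1/p}`, so `Ω^k(f_A, t)_p ≤ |det A|^{-1+1/p} Ω^k(f, ‖A⁻¹‖ t)_p`. Finally the measure
`dt/t` is invariant under `t ↦ ‖A⁻¹‖ t`, which turns the weight `t^{-s}` into `‖A⁻¹‖^s u^{-s}`.
-/

open MeasureTheory
open scoped ENNReal NNReal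

section Differences

variable {α β : Type*}

theorem diffIter_comp [Add α] [Add β] (k : ℕ) (M : α → β) (hM : ∀ x y, M (x + y) = M x + M y)
    (h : α) (f : β → ℝ) : diffIter k h (f ∘ M) = diffIter k (M h) f ∘ M := by
  induction k with
  | zero => rfl
  | succ n ih =>
    simp only [diffIter, Function.iterate_succ_apply'] at ih ⊢
    rw [ih]
    funext x
    simp only [diffOp, Function.comp_apply, hM]

theorem diffIter_const_mul [AddCommMonoid α] (k : ℕ) (c : ℝ) (h : α) (f : α → ℝ) :
    diffIter k h (fun x => c * f x) = fun x => c * diffIter k h f x :=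
  fwdDiff_iter_const_smul (h := h) c f k

end Differences

open Matrix

theorem eLpNorm_comp_linearMap {E F : Type*} [NormedAddCommGroup E] [NormedSpace ℝ E]
    [MeasurableSpace E] [BorelSpace E] [FiniteDimensional ℝ E] (μ : Measure E)
    [μ.IsAddHaarMeasure] [NormedAddCommGroup F] {p : ℝ≥0∞} (hp : p ≠ ∞) {L : E →ₗ[ℝ] E}
    (hL : LinearMap.det L ≠ 0) (g : E → F) :
    eLpNorm (g ∘ L) p μ = ENNReal.ofReal |(LinearMap.det L)⁻¹| ^ (1 / p).toReal * eLpNorm g p μ := by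
  have hemb : MeasurableEmbedding L :=
    (L.equivOfDetNeZero hL).toContinuousLinearEquiv.toHomeomorph.measurableEmbedding
  rw [← hemb.eLpNorm_map_measure, Measure.map_linearMap_addHaar_eq_smul_addHaar μ hL,
    eLpNorm_smul_measure_of_ne_top hp, smul_eq_mul]

theorem eLpNorm_comp_mulVec {d : ℕ} {F : Type*} [NormedAddCommGroup F] {p : ℝ≥0∞} (hp : p ≠ ∞)
    {M : Matrix (Fin d) (Fin d) ℝ} (hM : M.det ≠ 0) (g : (Fin d → ℝ) → F) :
    eLpNorm (fun x => g (M *ᵥ x)) p volume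
      = ENNReal.ofReal |M.det⁻¹| ^ (1 / p).toReal * eLpNorm g p volume := by
  rw [← LinearMap.det_toLin'] at hM ⊢
  exact eLpNorm_comp_linearMap volume hp hM g

theorem sum_sq_eq_one_iff_norm_toLp {d : ℕ} (h : Fin d → ℝ) :
    ∑ i, h i ^ 2 = 1 ↔ ‖WithLp.toLp 2 h‖ = 1 := by
  rw [EuclideanSpace.norm_eq, Real.sqrt_eq_one]
  simp only [Real.norm_eq_abs, sq_abs]

section Modulus

variable {d : ℕ} {k : ℕ} {p : ℝ≥0∞} {f : (Fin d → ℝ) → ℝ}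

theorem OmegaM_mono : Monotone (OmegaM d k p f) := fun _ _ hδ =>
  iSup₂_mono fun _ _ => iSup_mono fun _ => iSup_mono' fun ht => ⟨ht.trans hδ, le_rfl⟩

theorem eLpNorm_diffIter_le_OmegaM [Nonempty (Fin d)] (v : Fin d → ℝ) :
    eLpNorm (diffIter k v f) p volume ≤ OmegaM d k p f ‖WithLp.toLp 2 v‖ := by
  obtain ⟨h, hh, hv⟩ : ∃ h : Fin d → ℝ, ∑ i, h i ^ 2 = 1 ∧ ‖WithLp.toLp 2 v‖ • h = v := by
    rcases eq_or_ne v 0 with rfl | hv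
    · obtain ⟨i⟩ := ‹Nonempty (Fin d)›
      exact ⟨Pi.single i 1, by simp [Pi.single_apply], by simp⟩
    · have hr : ‖WithLp.toLp 2 v‖ ≠ 0 := by simpa using hv
      refine ⟨‖WithLp.toLp 2 v‖⁻¹ • v, ?_, by rw [smul_smul, mul_inv_cancel₀ hr, one_smul]⟩
      rw [sum_sq_eq_one_iff_norm_toLp, WithLp.toLp_smul, norm_smul, norm_inv, norm_norm,
        inv_mul_cancel₀ hr]
  conv_lhs => rw [← hv]
  exact le_iSup₂_of_le h hh (le_iSup₂_of_le _ (abs_norm _).le le_rfl)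

theorem OmegaM_const_mul_comp_mulVec_le [Nonempty (Fin d)] (hp : p ≠ ∞) (c : ℝ)
    {M : Matrix (Fin d) (Fin d) ℝ} (hM : M.det ≠ 0) (t : ℝ) :
    OmegaM d k p (fun x => c * f (M *ᵥ x)) t
      ≤ ‖c‖ₑ * ENNReal.ofReal |M.det⁻¹| ^ (1 / p).toReal
        * OmegaM d k p f (‖Matrix.toEuclideanCLM (𝕜 := ℝ) M‖ * t) := by
  refine iSup₂_le fun h hh => iSup₂_le fun τ hτ => ?_
  have hdiff : diffIter k (τ • h) (fun x => c * f (M *ᵥ x))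
      = c • fun x => diffIter k (M *ᵥ (τ • h)) f (M *ᵥ x) := by
    rw [diffIter_const_mul]
    exact congrArg (c • ·) (diffIter_comp k (M *ᵥ ·) (Matrix.mulVec_add M) (τ • h) f)
  have hnorm : ‖WithLp.toLp 2 (M *ᵥ (τ • h))‖ ≤ ‖Matrix.toEuclideanCLM (𝕜 := ℝ) M‖ * t := by
    rw [← Matrix.toEuclideanCLM_toLp]
    refine (ContinuousLinearMap.le_opNorm _ _).trans (mul_le_mul_of_nonneg_left ?_ (norm_nonneg _))
    rwa [WithLp.toLp_smul, norm_smul, (sum_sq_eq_one_iff_norm_toLp h).1 hh, mul_one,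
      Real.norm_eq_abs]
  rw [hdiff, eLpNorm_const_smul, eLpNorm_comp_mulVec hp hM, mul_assoc]
  gcongr
  exact (eLpNorm_diffIter_le_OmegaM _).trans (OmegaM_mono hnorm)

end Modulus

noncomputable def mixedDensity {d : ℕ} (A : Matrix (Fin d) (Fin d) ℝ) (f : (Fin d → ℝ) → ℝ) :
    (Fin d → ℝ) → ℝ :=
  fun x => |(A⁻¹).det| * f (A⁻¹ *ᵥ x)

theorem OmegaM_mixedDensity_le {d k : ℕ} [Nonempty (Fin d)] {p : ℝ} (hp : 0 < p)
    {A : Matrix (Fin d) (Fin d) ℝ} (hA : A.det ≠ 0) (f : (Fin d → ℝ) → ℝ) (t : ℝ) :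
    OmegaM d k (ENNReal.ofReal p) (mixedDensity A f) t
      ≤ ENNReal.ofReal (|A.det| ^ (-1 + 1 / p))
        * OmegaM d k (ENNReal.ofReal p) f (‖Matrix.toEuclideanCLM (𝕜 := ℝ) A⁻¹‖ * t) := by
  have hdet : (A⁻¹).det = A.det⁻¹ := by rw [Matrix.det_nonsing_inv, Ring.inverse_eq_inv']
  have hA' : 0 < |A.det| := abs_pos.2 hA
  refine (OmegaM_const_mul_comp_mulVec_le ENNReal.ofReal_ne_top _
    (hdet ▸ inv_ne_zero hA) t).trans_eq ?_
  rw [hdet, inv_inv, Real.enorm_of_nonneg (abs_nonneg _), abs_inv, one_div (ENNReal.ofReal p),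
    ENNReal.toReal_inv, ENNReal.toReal_ofReal hp.le, ENNReal.ofReal_rpow_of_pos hA',
    ← ENNReal.ofReal_mul (by positivity), Real.rpow_add hA', Real.rpow_neg_one, one_div]

section Besov

noncomputable def besovSeminorm (s q : ℝ) (Φ : ℝ → ℝ≥0∞) : ℝ≥0∞ :=
  (∫⁻ t in Set.Ioi (0 : ℝ), (ENNReal.ofReal (t ^ (-s)) * Φ t) ^ q * ENNReal.ofReal t⁻¹) ^ (1 / q)

variable {s q : ℝ} {Φ Ψ : ℝ → ℝ≥0∞}

theorem besovSeminorm_mono (hq : 0 ≤ q) (hΦΨ : ∀ t, 0 < t → Φ t ≤ Ψ t) :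
    besovSeminorm s q Φ ≤ besovSeminorm s q Ψ := by
  unfold besovSeminorm
  gcongr ?_ ^ _
  refine setLIntegral_mono' measurableSet_Ioi fun t ht => ?_
  gcongr
  exact hΦΨ t ht

theorem besovSeminorm_const_mul (hq : 0 < q) {C : ℝ≥0∞} (hC : C ≠ ∞) :
    besovSeminorm s q (fun t => C * Φ t) = C * besovSeminorm s q Φ := by
  have hCq : C ^ q ≠ ∞ := ENNReal.rpow_ne_top_of_nonneg hq.le hC
  simp only [besovSeminorm, mul_left_comm _ C, ENNReal.mul_rpow_of_nonneg _ _ hq.le, mul_assoc]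
  rw [lintegral_const_mul' _ _ hCq, ENNReal.mul_rpow_of_nonneg _ _ (by positivity),
    ← ENNReal.rpow_mul, mul_one_div_cancel hq.ne', ENNReal.rpow_one]

theorem setLIntegral_Ioi_comp_mul_left {c : ℝ} (hc : 0 < c) (G : ℝ → ℝ≥0∞) :
    ∫⁻ t in Set.Ioi 0, G (c * t) = ENNReal.ofReal c⁻¹ * ∫⁻ u in Set.Ioi 0, G u := by
  have hemb := measurableEmbedding_mulLeft₀ hc.ne'
  have hpre : (c * ·) ⁻¹' Set.Ioi (0 : ℝ) = Set.Ioi 0 := by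
    ext t
    simp [mul_pos_iff_of_pos_left hc]
  conv_lhs => rw [← hpre]
  rw [← hemb.lintegral_map, ← hemb.restrict_map, Real.map_volume_mul_left hc.ne',
    Measure.restrict_smul, lintegral_smul_measure, smul_eq_mul, abs_of_pos (inv_pos.2 hc)]

theorem besovSeminorm_comp_mul_left (hq : 0 < q) {c : ℝ} (hc : 0 < c) :
    besovSeminorm s q (fun t => Φ (c * t)) = ENNReal.ofReal (c ^ s) * besovSeminorm s q Φ := by
  have hscale : ∀ t ∈ Set.Ioi (0 : ℝ),
      (ENNReal.ofReal (t ^ (-s)) * Φ (c * t)) ^ q * ENNReal.ofReal t⁻¹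
        = ENNReal.ofReal (c ^ s) ^ q * ENNReal.ofReal c
          * ((ENNReal.ofReal ((c * t) ^ (-s)) * Φ (c * t)) ^ q * ENNReal.ofReal (c * t)⁻¹) := by
    intro t (ht : 0 < t)
    have hpow : t ^ (-s) = c ^ s * (c * t) ^ (-s) := by
      rw [Real.mul_rpow hc.le ht.le, ← mul_assoc, ← Real.rpow_add hc, add_neg_cancel,
        Real.rpow_zero, one_mul]
    have hinv : t⁻¹ = c * (c * t)⁻¹ := by field_simp
    rw [hpow, hinv, ENNReal.ofReal_mul (by positivity), ENNReal.ofReal_mul hc.le, mul_assoc,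
      ENNReal.mul_rpow_of_nonneg _ _ hq.le]
    ring
  have hcq : ENNReal.ofReal (c ^ s) ^ q * ENNReal.ofReal c ≠ ∞ :=
    ENNReal.mul_ne_top (ENNReal.rpow_ne_top_of_nonneg hq.le ENNReal.ofReal_ne_top)
      ENNReal.ofReal_ne_top
  have hcc : ENNReal.ofReal c * ENNReal.ofReal c⁻¹ = 1 := by
    rw [← ENNReal.ofReal_mul hc.le, mul_inv_cancel₀ hc.ne', ENNReal.ofReal_one]
  unfold besovSeminorm
  rw [setLIntegral_congr_fun measurableSet_Ioi hscale, lintegral_const_mul' _ _ hcq,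
    setLIntegral_Ioi_comp_mul_left hc
      (fun u => (ENNReal.ofReal (u ^ (-s)) * Φ u) ^ q * ENNReal.ofReal u⁻¹),
    mul_assoc, ← mul_assoc (ENNReal.ofReal c), hcc, one_mul,
    ENNReal.mul_rpow_of_nonneg _ _ (by positivity), ← ENNReal.rpow_mul,
    mul_one_div_cancel hq.ne', ENNReal.rpow_one]

end Besov

theorem mixed_density_besov_seminorm_le_general
    (d : ℕ) (hd : 1 ≤ d) (p q : ℝ) (hp : 1 ≤ p) (hq : 1 ≤ q)
    (k : ℕ) (s : ℝ)
    (A : Matrix (Fin d) (Fin d) ℝ) (hA : IsUnit A.det)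
    (f : (Fin d → ℝ) → ℝ) :
    (∫⁻ t in Set.Ioi (0 : ℝ),
        (ENNReal.ofReal (t ^ (-s))
            * OmegaM d k (ENNReal.ofReal p)
                (fun x => |(A⁻¹).det| * f ((A⁻¹).mulVec x)) t) ^ q
          * ENNReal.ofReal t⁻¹) ^ (1 / q)
      ≤ ENNReal.ofReal
            (|A.det| ^ (-1 + 1 / p) * ‖Matrix.toEuclideanCLM (𝕜 := ℝ) A⁻¹‖ ^ s)
          * (∫⁻ u in Set.Ioi (0 : ℝ),
              (ENNReal.ofReal (u ^ (-s)) * OmegaM d k (ENNReal.ofReal p) f u) ^ q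
                * ENNReal.ofReal u⁻¹) ^ (1 / q) := by
  have : Nonempty (Fin d) := ⟨⟨0, hd⟩⟩
  have hq0 : 0 < q := by linarith
  have hnorm : 0 < ‖Matrix.toEuclideanCLM (𝕜 := ℝ) A⁻¹‖ := by
    refine norm_pos_iff.2 ((map_ne_zero_iff _ (Matrix.toEuclideanCLM).injective).2 fun h0 => ?_)
    simpa [h0] using (isUnit_nonsing_inv_det A hA).ne_zero
  change besovSeminorm s q (OmegaM d k _ (mixedDensity A f))
    ≤ _ * besovSeminorm s q (OmegaM d k _ f)
  calc besovSeminorm s q (OmegaM d k _ (mixedDensity A f))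
      ≤ besovSeminorm s q fun t => ENNReal.ofReal (|A.det| ^ (-1 + 1 / p))
          * OmegaM d k (ENNReal.ofReal p) f (‖Matrix.toEuclideanCLM (𝕜 := ℝ) A⁻¹‖ * t) :=
        besovSeminorm_mono hq0.le fun t _ => OmegaM_mixedDensity_le (by linarith) hA.ne_zero f t
    _ = _ := by
        rw [besovSeminorm_const_mul hq0 ENNReal.ofReal_ne_top,
          besovSeminorm_comp_mul_left hq0 hnorm, ← mul_assoc,
          ← ENNReal.ofReal_mul (by positivity)]

/-- Besov-seminorm bound for the mixed density: for `0 < s < k`,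
`(∫_0^∞ (t^{−s} Ω^k(f_A,t)_p)^q dt/t)^{1/q}
  ≤ |det A|^{−1+1/p} ‖A⁻¹‖^s (∫_0^∞ (u^{−s} Ω^k(f,u)_p)^q du/u)^{1/q}`. -/
theorem mixed_density_besov_seminorm_le
    (d : ℕ) (hd : 1 ≤ d) (p q : ℝ) (hp : 1 ≤ p) (hq : 1 ≤ q)
    (k : ℕ) (hk : 1 ≤ k) (s : ℝ) (hs : 0 < s) (hsk : s < k)
    (A : Matrix (Fin d) (Fin d) ℝ) (hA : IsUnit A.det)
    (f : (Fin d → ℝ) → ℝ) (hf : MemLp f (ENNReal.ofReal p) volume) :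
    (∫⁻ t in Set.Ioi (0 : ℝ),
        (ENNReal.ofReal (t ^ (-s))
            * OmegaM d k (ENNReal.ofReal p)
                (fun x => |(A⁻¹).det| * f ((A⁻¹).mulVec x)) t) ^ q
          * ENNReal.ofReal t⁻¹) ^ (1 / q)
      ≤ ENNReal.ofReal
            (|A.det| ^ (-1 + 1 / p) * ‖Matrix.toEuclideanCLM (𝕜 := ℝ) A⁻¹‖ ^ s)
          * (∫⁻ u in Set.Ioi (0 : ℝ),
              (ENNReal.ofReal (u ^ (-s)) * OmegaM d k (ENNReal.ofReal p) f u) ^ q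
                * ENNReal.ofReal u⁻¹) ^ (1 / q) :=
  mixed_density_besov_seminorm_le_general d hd p q hp hq k s A hA f
end
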